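/- Let U be an n-split full subcategory of T and let X_{n+2} →(λ_{n+2}) X_{n+1} →(λ_{n+1}) … →(λ₁) X₀ be a sequence of morphisms between objects of U with λᵢ ∘ λᵢ₊₁ = 0 for 1 ≤ i ≤ n+1. Then the (n+2)-fold Toda bracket ⟨λ₁,…,λ_{n+2}⟩ ⊆ Hom(X_{n+2}⟦n⟧, X₀) is non-empty. -/

import Mathlib

open CategoryTheory Category Limits Pretriangulated

universe v u

variable (T : Type u) [Category.{v} T] [Preadditive T] [HasZeroObject T]
  [HasShift T ℤ] [∀ n : ℤ, Functor.Additive (shiftFunctor T n)] [Pretriangulated T]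

/-- An `n`-filtered object `X ∈ {λ₁, …, λ_{n-1}}` for the sequence of composable maps
`lam j : X (j+1) ⟶ X j` (so that `lam (j-1)` is the map `λ_j : X_j → X_{j-1}`).
It consists of a sequence `0 = F₀X → F₁X → ⋯ → FₙX` together with chosen
distinguished triangles `F_jX ⟶(i_j) F_{j+1}X ⟶(p_{j+1}) X_j⟦j⟧ ⟶(d_j) (F_jX)⟦1⟧`
for `0 ≤ j ≤ n-1` such that `(p_j⟦1⟧) ∘ d_j = λ_j⟦j⟧` for `1 ≤ j ≤ n-1`.
The field `sig` is the canonical identification `X₀ ≅ F₁X` (inverse to the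
isomorphism `p₁ : F₁X ⟶ X₀⟦0⟧`), used to define the map `σ'_X`. -/
structure FilteredObj (n : ℕ) (X : ℕ → T) (lam : ∀ j : ℕ, X (j + 1) ⟶ X j) where
  F : ℕ → T
  isZero_F₀ : IsZero (F 0)
  i : ∀ j : ℕ, F j ⟶ F (j + 1)
  p : ∀ j : ℕ, F (j + 1) ⟶ (X j)⟦(j : ℤ)⟧
  d : ∀ j : ℕ, (X j)⟦(j : ℤ)⟧ ⟶ (F j)⟦(1 : ℤ)⟧
  dist : ∀ j, j < n → Triangle.mk (i j) (p j) (d j) ∈ distTriang T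
  comm : ∀ j : ℕ, j + 2 ≤ n →
    d (j + 1) ≫ (p j)⟦(1 : ℤ)⟧' =
      (lam j)⟦((j + 1 : ℕ) : ℤ)⟧' ≫
        (shiftFunctorAdd' T (j : ℤ) (1 : ℤ) ((j + 1 : ℕ) : ℤ)
          (by push_cast; ring)).hom.app (X j)
  sig : X 0 ⟶ F 1
  sig_p : sig ≫ p 0 = (shiftFunctorZero' T ((0 : ℕ) : ℤ) (by simp)).inv.app (X 0)

namespace FilteredObj

variable {T}
variable {n : ℕ} {X : ℕ → T} {lam : ∀ j : ℕ, X (j + 1) ⟶ X j}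

/-- The composite `F_jX → F_kX` of the maps `i` in a filtered object. -/
def ιLe (E : FilteredObj T n X lam) {j k : ℕ} (h : j ≤ k) : E.F j ⟶ E.F k :=
  Nat.leRecOn (C := fun m => (E.F j ⟶ E.F m)) h (fun {m} g => g ≫ E.i m) (𝟙 (E.F j))

/-- The map `σ'_X : X₀ ≅ F₁X → FₙX` of a filtered object. -/
def sigma' (E : FilteredObj T n X lam) (h : 1 ≤ n) : X 0 ⟶ E.F n :=
  E.sig ≫ E.ιLe h

end FilteredObj

/-- A full subcategory of `T`, given by a set `U` of objects, is `n`-split if for all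
objects `X, Y` of `U` and all integers `k`, every morphism `X⟦k⟧ ⟶ Y` is zero unless
`n` divides `k`. -/
def IsNSplit (n : ℕ) (U : Set T) : Prop :=
  ∀ X ∈ U, ∀ Y ∈ U, ∀ k : ℤ, ¬ ((n : ℤ) ∣ k) → ∀ f : X⟦k⟧ ⟶ Y, f = 0

/-- The `(n+2)`-fold Toda bracket `⟨λ₁, …, λ_{n+2}⟩ ⊆ Hom(X_{n+2}⟦n⟧, X₀)` of the
sequence of composable maps `lam j : X (j+1) ⟶ X j` (so `lam (j-1) = λ_j`):
a morphism `γ : X_{n+2}⟦n⟧ ⟶ X₀` lies in it if there exist an `(n+1)`-filtered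
object `X ∈ {λ₂, …, λ_{n+1}}`, a morphism `γ₀ : X ⟶ X₀` with `γ₀ ∘ σ'_X = λ₁`, and a
morphism `γ_{n+2} : X_{n+2}⟦n⟧ ⟶ X` with `σ_X ∘ γ_{n+2} = λ_{n+2}⟦n⟧`, such that
`γ = γ₀ ∘ γ_{n+2}`. -/
def todaBracket (n : ℕ) (X : ℕ → T) (lam : ∀ j : ℕ, X (j + 1) ⟶ X j) :
    Set ((X (n + 2))⟦(n : ℤ)⟧ ⟶ X 0) :=
  { γ | ∃ (E : FilteredObj T (n + 1) (fun j => X (j + 1)) (fun j => lam (j + 1)))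
      (γ₀ : E.F (n + 1) ⟶ X 0) (γt : (X (n + 2))⟦(n : ℤ)⟧ ⟶ E.F (n + 1)),
      E.sigma' (Nat.succ_le_succ (Nat.zero_le n)) ≫ γ₀ = lam 0 ∧
      γt ≫ E.p n = (lam (n + 1))⟦(n : ℤ)⟧' ∧
      γ = γt ≫ γ₀ }


section HigherToda

variable {T}

section Aux

variable (n : ℕ) (U : Set T)

def IsNSplit' (n : ℕ) (U : Set T) : Prop :=
  ∀ X ∈ U, ∀ Y ∈ U, ∀ k : ℤ, ¬ ((n : ℤ) ∣ k) → ∀ f : X⟦k⟧ ⟶ Y, f = 0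

lemma not_dvd_aux {t : ℤ} (h1 : 0 < t) (h2 : t < (n : ℤ)) : ¬ (n : ℤ) ∣ t :=
  fun hd => absurd (Int.le_of_dvd h1 hd) (by omega)

variable {n U}

lemma split1 (hU : IsNSplit' n U) {A B : T} (hA : A ∈ U) (hB : B ∈ U) (k j : ℤ)
    (h : ¬ (n : ℤ) ∣ (k - j)) (f : A⟦k⟧ ⟶ B⟦j⟧) : f = 0 := by
  obtain ⟨g, hg⟩ := (shiftFunctor T j).map_surjective (X := A⟦k - j⟧) (Y := B)
    ((shiftFunctorAdd' T (k - j) j k (by ring)).inv.app A ≫ f)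
  have hg0 : g = 0 := hU A hA B hB (k - j) h g
  rw [hg0, Functor.map_zero] at hg
  have : f = (shiftFunctorAdd' T (k - j) j k (by ring)).hom.app A ≫
      ((shiftFunctorAdd' T (k - j) j k (by ring)).inv.app A ≫ f) := by simp
  rw [this, ← hg, comp_zero]

lemma split2 (hU : IsNSplit' n U) {A B : T} (hA : A ∈ U) (hB : B ∈ U) (k a l : ℤ)
    (h : ¬ (n : ℤ) ∣ (k - a - l)) (f : A⟦k⟧ ⟶ (B⟦a⟧)⟦l⟧) : f = 0 := by
  have h1 : f ≫ (shiftFunctorAdd' T a l (a + l) rfl).inv.app B = 0 :=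
    split1 hU hA hB k (a + l) (by rwa [show k - (a + l) = k - a - l by ring]) _
  have : f = (f ≫ (shiftFunctorAdd' T a l (a + l) rfl).inv.app B) ≫
      (shiftFunctorAdd' T a l (a + l) rfl).hom.app B := by simp
  rw [this, h1, zero_comp]

end Aux

section Key

set_option linter.unusedSectionVars false

variable (n : ℕ) (U : Set T)

/-- Vanishing of `U`-maps into `B` (a filtration stage built from cells of degree `< m`). -/
def KeyF (B : T) (m : ℕ) : Prop :=
  ∀ A, A ∈ U → ∀ k l : ℤ, (∀ i : ℕ, i < m → ¬ (n : ℤ) ∣ (k - l - (i : ℤ))) →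
    ∀ f : A⟦k⟧ ⟶ B⟦l⟧, f = 0

variable {n U}

lemma keyF_of_isZero {B : T} (hB : IsZero B) (m : ℕ) : KeyF n U B m := by
  intro A hA k l _ f
  exact ((shiftFunctor T l).map_isZero hB).eq_of_tgt f 0

lemma keyStep (hU : IsNSplit' n U) {m : ℕ} {Y : T} (hY : Y ∈ U)
    {Fq Fp : T} {ip : Fq ⟶ Fp} {pp : Fp ⟶ Y⟦(m : ℤ)⟧} {dp : Y⟦(m : ℤ)⟧ ⟶ Fq⟦(1 : ℤ)⟧}
    (hq : KeyF n U Fq m) (hdist : Triangle.mk ip pp dp ∈ distTriang T) :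
    KeyF n U Fp (m + 1) := by
  intro A hA k l hcond f
  have hdist' := Triangle.shift_distinguished _ hdist l
  have h2 : f ≫ (l.negOnePow • pp⟦l⟧') = 0 := by
    have h0 : f ≫ pp⟦l⟧' = 0 := split2 hU hA hY k (m : ℤ) l
      (by have := hcond m (Nat.lt_succ_self m); rwa [show k - l - (m : ℤ) = k - (m : ℤ) - l by ring] at this) _
    rw [Linear.comp_units_smul, h0, smul_zero]
  obtain ⟨g, hg⟩ := Triangle.coyoneda_exact₂ _ hdist' f h2
  have hg0 : g = 0 := hq A hA k l (fun i hi => hcond i (hi.trans (Nat.lt_succ_self m))) g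
  rw [hg, hg0, zero_comp]; rfl

end Key

section Cone

set_option linter.unusedSectionVars false

variable (X : ℕ → T) (lam : ∀ j : ℕ, X (j + 1) ⟶ X j)

/-- The map `λ_{m+2}⟦m+1⟧` seen as a map `X_{m+2}⟦m+1⟧ ⟶ (X_{m+1}⟦m⟧)⟦1⟧`. -/
noncomputable def Rmap (m : ℕ) : (X (m + 2))⟦((m + 1 : ℕ) : ℤ)⟧ ⟶ ((X (m + 1))⟦((m : ℕ) : ℤ)⟧)⟦(1 : ℤ)⟧ :=
  (lam (m + 1))⟦((m + 1 : ℕ) : ℤ)⟧' ≫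
    (shiftFunctorAdd' T ((m : ℕ) : ℤ) (1 : ℤ) ((m + 1 : ℕ) : ℤ) (by push_cast; ring)).hom.app (X (m + 1))

/-- The desuspension of `-Rmap m`. -/
noncomputable def ubar (m : ℕ) : ((X (m + 2))⟦((m + 1 : ℕ) : ℤ)⟧)⟦(-1 : ℤ)⟧ ⟶ (X (m + 1))⟦((m : ℕ) : ℤ)⟧ :=
  (shiftFunctor T (1 : ℤ)).preimage
    (-((shiftEquiv T (1 : ℤ)).counitIso.hom.app ((X (m + 2))⟦((m + 1 : ℕ) : ℤ)⟧) ≫ Rmap X lam m))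

lemma ubar_shift (m : ℕ) : (ubar X lam m)⟦(1 : ℤ)⟧' =
    -((shiftEquiv T (1 : ℤ)).counitIso.hom.app ((X (m + 2))⟦((m + 1 : ℕ) : ℤ)⟧) ≫ Rmap X lam m) :=
  Functor.map_preimage _ _

/-- Given a "desuspended attaching map" `w` lifting `ubar m`, build the next stage of the
filtration as a cone on `w`. -/
lemma coneStep (m : ℕ) (Fq : T) (pq : Fq ⟶ (X (m + 1))⟦((m : ℕ) : ℤ)⟧)
    (w : ((X (m + 2))⟦((m + 1 : ℕ) : ℤ)⟧)⟦(-1 : ℤ)⟧ ⟶ Fq) (hw : w ≫ pq = ubar X lam m) :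
    ∃ (Fp : T) (ip : Fq ⟶ Fp) (pp : Fp ⟶ (X (m + 2))⟦((m + 1 : ℕ) : ℤ)⟧)
      (dp : (X (m + 2))⟦((m + 1 : ℕ) : ℤ)⟧ ⟶ Fq⟦(1 : ℤ)⟧),
      (Triangle.mk ip pp dp ∈ distTriang T) ∧ dp ≫ pq⟦(1 : ℤ)⟧' = Rmap X lam m := by
  obtain ⟨Z, g, h', mem⟩ := distinguished_cocone_triangle w
  have rot := rot_of_distTriang _ mem
  set κ : ((X (m + 2))⟦((m + 1 : ℕ) : ℤ)⟧)⟦(-1 : ℤ)⟧⟦(1 : ℤ)⟧ ≅ (X (m + 2))⟦((m + 1 : ℕ) : ℤ)⟧ := (shiftEquiv T (1 : ℤ)).counitIso.app ((X (m + 2))⟦((m + 1 : ℕ) : ℤ)⟧) with hκ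
  refine ⟨Z, g, h' ≫ κ.hom, κ.inv ≫ (-(w⟦(1 : ℤ)⟧')), ?_, ?_⟩
  · refine isomorphic_distinguished _ rot _ ?_
    exact Triangle.isoMk _ _ (Iso.refl _) (Iso.refl _) κ.symm (by exact (comp_id _).trans (id_comp _).symm) (by exact ((assoc _ _ _).trans ((congrArg (fun t => h' ≫ t) κ.hom_inv_id).trans (comp_id h'))).trans (id_comp h').symm) (by exact (congrArg (fun t => (κ.inv ≫ (-(w⟦(1 : ℤ)⟧'))) ≫ t) ((shiftFunctor T (1 : ℤ)).map_id _)).trans (comp_id _))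
  · have : (-(w⟦(1 : ℤ)⟧')) ≫ pq⟦(1 : ℤ)⟧' = κ.hom ≫ Rmap X lam m := by
      rw [Preadditive.neg_comp, ← Functor.map_comp, hw, ubar_shift]
      simp
      exact neg_neg _
    rw [assoc, this, Iso.inv_hom_id_assoc]

end Cone

section Extend

set_option linter.unusedSectionVars false

/-- Extend a map along the first map of a distinguished triangle, provided the
obstruction vanishes. -/
lemma extend_g {P Q Y B : T} {ip : P ⟶ Q} {pp : Q ⟶ Y} {dp : Y ⟶ P⟦(1 : ℤ)⟧}
    (hdist : Triangle.mk ip pp dp ∈ distTriang T) (g : P ⟶ B)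
    (hobs : dp ≫ g⟦(1 : ℤ)⟧' = 0) : ∃ g' : Q ⟶ B, ip ≫ g' = g := by
  have h2 := inv_rot_of_distTriang _ hdist
  have hnat := (shiftFunctorCompIsoId T (1 : ℤ) (-1 : ℤ) (by ring)).hom.naturality g
  have hm : (Triangle.mk ip pp dp).invRotate.mor₁ ≫ g = 0 := by
    change (-(dp⟦(-1 : ℤ)⟧') ≫ (shiftFunctorCompIsoId T (1 : ℤ) (-1 : ℤ) (by ring)).hom.app P) ≫ g = 0
    rw [Preadditive.neg_comp, assoc]
    have : (shiftFunctorCompIsoId T (1 : ℤ) (-1 : ℤ) (by ring)).hom.app P ≫ g =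
        (g⟦(1 : ℤ)⟧')⟦(-1 : ℤ)⟧' ≫ (shiftFunctorCompIsoId T (1 : ℤ) (-1 : ℤ) (by ring)).hom.app B := by
      simpa using hnat.symm
    rw [this, ← assoc, ← Functor.map_comp, hobs]
    simp
  obtain ⟨g', hg'⟩ := Triangle.yoneda_exact₂ _ h2 g hm
  exact ⟨g', hg'.symm⟩

end Extend

section Obstr

set_option linter.unusedSectionVars false

variable (X : ℕ → T) (lam : ∀ j : ℕ, X (j + 1) ⟶ X j)

lemma Rmap_Rmap (m : ℕ) (hc : lam (m + 2) ≫ lam (m + 1) = 0) :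
    Rmap X lam (m + 1) ≫ (Rmap X lam m)⟦(1 : ℤ)⟧' = 0 := by
  dsimp only [Rmap]
  rw [Functor.map_comp]
  have hnat := (shiftFunctorAdd' T ((m + 1 : ℕ) : ℤ) (1 : ℤ) ((m + 1 + 1 : ℕ) : ℤ)
    (by push_cast; ring)).hom.naturality (lam (m + 1))
  simp only [assoc]
  rw [← reassoc_of% hnat, ← Functor.map_comp_assoc, hc]
  simp

lemma ubar_Rmap (m : ℕ) (hc : lam (m + 2) ≫ lam (m + 1) = 0) :
    ubar X lam (m + 1) ≫ Rmap X lam m = 0 := by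
  apply (shiftFunctor T (1 : ℤ)).map_injective
  erw [Functor.map_comp, ubar_shift, Functor.map_zero, Preadditive.neg_comp, assoc,
    Rmap_Rmap X lam m hc, comp_zero, neg_zero]

lemma Rmap_zero_obs (hc : lam 1 ≫ lam 0 = 0) :
    Rmap X lam 0 ≫ (((shiftFunctorZero' T ((0 : ℕ) : ℤ) (by simp)).hom.app (X 1)) ≫ lam 0)⟦(1 : ℤ)⟧' = 0 := by
  have hθ : ∀ (A B : T) (f : A ⟶ B),
      f⟦((0 + 1 : ℕ) : ℤ)⟧' ≫ ((shiftFunctorAdd' T ((0 : ℕ) : ℤ) (1 : ℤ) ((0 + 1 : ℕ) : ℤ)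
          (by norm_num)).hom.app B ≫ ((shiftFunctorZero' T ((0 : ℕ) : ℤ) (by simp)).hom.app B)⟦(1 : ℤ)⟧') =
        ((shiftFunctorAdd' T ((0 : ℕ) : ℤ) (1 : ℤ) ((0 + 1 : ℕ) : ℤ)
          (by norm_num)).hom.app A ≫ ((shiftFunctorZero' T ((0 : ℕ) : ℤ) (by simp)).hom.app A)⟦(1 : ℤ)⟧') ≫
          f⟦(1 : ℤ)⟧' := by
    intro A B f
    have h1 := (shiftFunctorAdd' T ((0 : ℕ) : ℤ) (1 : ℤ) ((0 + 1 : ℕ) : ℤ)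
      (by norm_num)).hom.naturality f
    have h2 := (shiftFunctorZero' T ((0 : ℕ) : ℤ) (by norm_num)).hom.naturality f
    rw [← assoc, h1, Functor.comp_map, assoc, ← Functor.map_comp, h2, Functor.map_comp]
    simp
  have hc' : lam (0 + 1) ≫ lam 0 = 0 := hc
  dsimp only [Rmap]
  rw [Functor.map_comp, assoc, ← assoc ((shiftFunctorAdd' T _ _ _ _).hom.app (X 1)),
    ← hθ (X 1) (X 0) (lam 0), ← Functor.map_comp_assoc, hc']
  simp

end Obstr

section Tower

set_option linter.unusedSectionVars false

variable (n : ℕ) (U : Set T) (X : ℕ → T) (lam : ∀ j : ℕ, X (j + 1) ⟶ X j)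

/-- One stage of the inductive construction of the filtered object: it records the
filtration pieces `F m ⟶ F (m+1) ⟶ F (m+2)` together with the two attached
distinguished triangles, the compatibility `commp`, partial extensions of `λ₁`, and
vanishing properties. -/
structure StageS (m : ℕ) where
  Fr : T
  Fq : T
  Fp : T
  iq : Fr ⟶ Fq
  pq : Fq ⟶ (X (m + 1))⟦((m : ℕ) : ℤ)⟧
  dq : (X (m + 1))⟦((m : ℕ) : ℤ)⟧ ⟶ Fr⟦(1 : ℤ)⟧
  ip : Fq ⟶ Fp
  pp : Fp ⟶ (X (m + 2))⟦((m + 1 : ℕ) : ℤ)⟧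
  dp : (X (m + 2))⟦((m + 1 : ℕ) : ℤ)⟧ ⟶ Fq⟦(1 : ℤ)⟧
  gq : Fq ⟶ X 0
  gp : Fp ⟶ X 0
  distq : m ≤ n → Triangle.mk iq pq dq ∈ distTriang T
  distp : m + 1 ≤ n → Triangle.mk ip pp dp ∈ distTriang T
  commp : m + 1 ≤ n → dp ≫ pq⟦(1 : ℤ)⟧' = Rmap X lam m
  keyr : m ≤ n + 1 → KeyF n U Fr m
  keyq : m ≤ n → KeyF n U Fq (m + 1)
  keyp : m + 1 ≤ n → KeyF n U Fp (m + 2)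
  hg : ip ≫ gp = gq

/-- The data needed to extend a stage by one step. -/
structure PackS (m : ℕ) (Fq : T) (pq : Fq ⟶ (X (m + 1))⟦((m : ℕ) : ℤ)⟧) (gq : Fq ⟶ X 0) where
  Fp : T
  ip : Fq ⟶ Fp
  pp : Fp ⟶ (X (m + 2))⟦((m + 1 : ℕ) : ℤ)⟧
  dp : (X (m + 2))⟦((m + 1 : ℕ) : ℤ)⟧ ⟶ Fq⟦(1 : ℤ)⟧
  gp : Fp ⟶ X 0
  distp : m + 1 ≤ n → Triangle.mk ip pp dp ∈ distTriang T
  commp : m + 1 ≤ n → dp ≫ pq⟦(1 : ℤ)⟧' = Rmap X lam m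
  keyp : m + 1 ≤ n → KeyF n U Fp (m + 2)
  hg : ip ≫ gp = gq

variable {n U X lam}

lemma basePack_nonempty (hU : IsNSplit' n U) (hX1 : X 1 ∈ U) (hX2 : X 2 ∈ U)
    (hc : lam 1 ≫ lam 0 = 0) :
    Nonempty (PackS n U X lam 0 ((X 1)⟦((0 : ℕ) : ℤ)⟧) (𝟙 _)
      ((shiftFunctorZero' T ((0 : ℕ) : ℤ) (by simp)).hom.app (X 1) ≫ lam 0)) := by
  obtain ⟨Fp, ip, pp, dp, hdist, hcomm⟩ := coneStep X lam 0 ((X 1)⟦((0 : ℕ) : ℤ)⟧) (𝟙 _)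
    (ubar X lam 0) (comp_id _)
  have hdp : dp = Rmap X lam 0 := by
    have := hcomm
    rwa [CategoryTheory.Functor.map_id, comp_id] at this
  have hobs : dp ≫ (((shiftFunctorZero' T ((0 : ℕ) : ℤ) (by simp)).hom.app (X 1) ≫ lam 0))⟦(1 : ℤ)⟧' = 0 := by
    rw [hdp]
    exact Rmap_zero_obs X lam hc
  obtain ⟨gp, hgp⟩ := extend_g hdist _ hobs
  have hkq : KeyF n U ((X 1)⟦((0 : ℕ) : ℤ)⟧) (0 + 1) := by
    intro A hA k l hcond f
    refine split2 hU hA hX1 k ((0 : ℕ) : ℤ) l ?_ f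
    have := hcond 0 (by omega)
    rwa [show k - l - ((0 : ℕ) : ℤ) = k - ((0 : ℕ) : ℤ) - l by push_cast; ring] at this
  exact ⟨⟨Fp, ip, pp, dp, gp, fun _ => hdist, fun _ => hcomm,
    fun _ => keyStep hU hX2 hkq hdist, hgp⟩⟩

lemma stepPack_nonempty (hU : IsNSplit' n U) (hXU : ∀ j, j ≤ n + 2 → X j ∈ U)
    (hcomp : ∀ j, j ≤ n → lam (j + 1) ≫ lam j = 0)
    (m : ℕ) (s : StageS n U X lam m) :
    Nonempty (PackS n U X lam (m + 1) s.Fp s.pp s.gp) := by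
  by_cases h : m + 2 ≤ n
  · have hO1 : (ubar X lam (m + 1) ≫ s.dp) ≫ (s.pq)⟦(1 : ℤ)⟧' = 0 := by
      rw [assoc, s.commp (by omega), ubar_Rmap X lam m (hcomp (m + 1) (by omega))]
    have hdistq1 := Triangle.shift_distinguished _ (s.distq (by omega)) 1
    have hO2 : (ubar X lam (m + 1) ≫ s.dp) ≫ ((1 : ℤ).negOnePow • (s.pq)⟦(1 : ℤ)⟧') = 0 := by
      rw [Linear.comp_units_smul, hO1, smul_zero]
    obtain ⟨g, hgf⟩ := Triangle.coyoneda_exact₂ _ hdistq1 _ hO2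
    have hg0 : g = 0 := by
      have h1 : (shiftFunctorAdd' T ((m + 2 : ℕ) : ℤ) (-1 : ℤ) ((m + 1 : ℕ) : ℤ)
          (by push_cast; ring)).hom.app (X (m + 3)) ≫ g = 0 :=
        s.keyr (by omega) (X (m + 3)) (hXU (m + 3) (by omega)) ((m + 1 : ℕ) : ℤ) 1
          (fun i hi => not_dvd_aux n (by push_cast; omega) (by push_cast; omega)) _
      have h2 : g = (shiftFunctorAdd' T ((m + 2 : ℕ) : ℤ) (-1 : ℤ) ((m + 1 : ℕ) : ℤ)
          (by push_cast; ring)).inv.app (X (m + 3)) ≫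
          ((shiftFunctorAdd' T ((m + 2 : ℕ) : ℤ) (-1 : ℤ) ((m + 1 : ℕ) : ℤ)
          (by push_cast; ring)).hom.app (X (m + 3)) ≫ g) := by simp
      rw [h2, h1, comp_zero]
    have hub : ubar X lam (m + 1) ≫ s.dp = 0 := by rw [hgf, hg0, zero_comp]; rfl
    obtain ⟨w, hw⟩ := Triangle.coyoneda_exact₃ _ (s.distp (by omega)) (ubar X lam (m + 1)) hub
    obtain ⟨Fp, ip, pp, dp, hdist, hcomm⟩ := coneStep X lam (m + 1) s.Fp s.pp w hw.symm
    have hobs : dp ≫ (s.gp)⟦(1 : ℤ)⟧' = 0 :=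
      split1 hU (hXU (m + 3) (by omega)) (hXU 0 (by omega)) ((m + 2 : ℕ) : ℤ) 1
        (not_dvd_aux n (by push_cast; omega) (by push_cast; omega)) _
    obtain ⟨gp, hgp⟩ := extend_g hdist s.gp hobs
    exact ⟨⟨Fp, ip, pp, dp, gp, fun _ => hdist, fun _ => hcomm,
      fun _ => keyStep hU (hXU (m + 3) (by omega)) (s.keyp (by omega)) hdist, hgp⟩⟩
  · exact ⟨⟨s.Fp, 𝟙 _, 0, 0, s.gp, fun h' => absurd h' h, fun h' => absurd h' h,
      fun h' => absurd h' h, id_comp _⟩⟩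

end Tower

section Build

set_option linter.unusedSectionVars false
open ZeroObject

variable (n : ℕ) (U : Set T) (X : ℕ → T) (lam : ∀ j : ℕ, X (j + 1) ⟶ X j)
lemma keyq_base (hU : IsNSplit' n U) (hX1 : X 1 ∈ U) :
    KeyF n U ((X 1)⟦((0 : ℕ) : ℤ)⟧) 1 := by
  intro A hA k l hcond f
  refine split2 hU hA hX1 k ((0 : ℕ) : ℤ) l ?_ f
  have := hcond 0 (by omega)
  rwa [show k - l - ((0 : ℕ) : ℤ) = k - ((0 : ℕ) : ℤ) - l by push_cast; ring] at this

/-- The tower of stages, built by recursion. -/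
noncomputable def Tow (hU : IsNSplit' n U) (hXU : ∀ j, j ≤ n + 2 → X j ∈ U)
    (hcomp : ∀ j, j ≤ n → lam (j + 1) ≫ lam j = 0) :
    ∀ m, StageS n U X lam m := fun m =>
  Nat.rec
    (letI P₀ := (basePack_nonempty hU (hXU 1 (by omega)) (hXU 2 (by omega))
        (hcomp 0 (Nat.zero_le n))).some
     { Fr := 0
       Fq := (X 1)⟦((0 : ℕ) : ℤ)⟧
       Fp := P₀.Fp
       iq := 0
       pq := 𝟙 _
       dq := 0
       ip := P₀.ip
       pp := P₀.pp
       dp := P₀.dp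
       gq := (shiftFunctorZero' T ((0 : ℕ) : ℤ) (by simp)).hom.app (X 1) ≫ lam 0
       gp := P₀.gp
       distq := fun _ => contractible_distinguished₁ _
       distp := P₀.distp
       commp := P₀.commp
       keyr := fun _ => keyF_of_isZero (isZero_zero T) 0
       keyq := fun _ => keyq_base n U X hU (hXU 1 (by omega))
       keyp := P₀.keyp
       hg := P₀.hg })
    (fun m s =>
      letI P := (stepPack_nonempty hU hXU hcomp m s).some
      { Fr := s.Fq
        Fq := s.Fp
        Fp := P.Fp
        iq := s.ip
        pq := s.pp
        dq := s.dp
        ip := P.ip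
        pp := P.pp
        dp := P.dp
        gq := s.gp
        gp := P.gp
        distq := fun h => s.distp h
        distp := P.distp
        commp := P.commp
        keyr := fun h => s.keyq (by omega)
        keyq := s.keyp
        keyp := P.keyp
        hg := P.hg })
    m

end Build

namespace FilteredObj

variable {N : ℕ} {Y : ℕ → T} {mu : ∀ j : ℕ, Y (j + 1) ⟶ Y j}

lemma ιLe_self' (E : FilteredObj T N Y mu) {j : ℕ} (h : j ≤ j) : E.ιLe h = 𝟙 (E.F j) :=
  Nat.leRecOn_self _

lemma ιLe_succ' (E : FilteredObj T N Y mu) {j k : ℕ} (h1 : j ≤ k) (h2 : j ≤ k + 1) :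
    E.ιLe h2 = E.ιLe h1 ≫ E.i k :=
  Nat.leRecOn_succ h1 _

end FilteredObj

section Assemble

set_option linter.unusedSectionVars false
open ZeroObject

variable {n : ℕ} {U : Set T} {X : ℕ → T} {lam : ∀ j : ℕ, X (j + 1) ⟶ X j}
variable (hU : IsNSplit' n U) (hXU : ∀ j, j ≤ n + 2 → X j ∈ U)
    (hcomp : ∀ j, j ≤ n → lam (j + 1) ≫ lam j = 0)

/-- The `(n+1)`-filtered object assembled from the tower. -/
noncomputable def Efo : FilteredObj T (n + 1) (fun j => X (j + 1)) (fun j => lam (j + 1)) :=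
  letI W := Tow n U X lam hU hXU hcomp
  { F := fun j => match j with
      | 0 => (W 0).Fr
      | (j + 1) => (W j).Fq
    isZero_F₀ := isZero_zero T
    i := fun j => match j with
      | 0 => (W 0).iq
      | (j + 1) => (W (j + 1)).iq
    p := fun j => (W j).pq
    d := fun j => match j with
      | 0 => (W 0).dq
      | (j + 1) => (W (j + 1)).dq
    dist := fun j hj => match j, hj with
      | 0, _ => (W 0).distq (by omega)
      | (j + 1), hj => (W (j + 1)).distq (by omega)
    comm := fun j hj => (W j).commp (by omega)
    sig := (shiftFunctorZero' T ((0 : ℕ) : ℤ) (by simp)).inv.app (X 1)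
    sig_p := comp_id _ }

lemma Efo_gamma0 :
    (Efo hU hXU hcomp).sigma' (Nat.succ_le_succ (Nat.zero_le n)) ≫
      (Tow n U X lam hU hXU hcomp n).gq = lam 0 := by
  letI W := Tow n U X lam hU hXU hcomp
  letI E := Efo hU hXU hcomp
  have key : ∀ m : ℕ, E.sig ≫ E.ιLe (Nat.succ_le_succ (Nat.zero_le m)) ≫ (W m).gq = lam 0 := by
    intro m
    induction m with
    | zero =>
      rw [E.ιLe_self']
      show (shiftFunctorZero' T ((0 : ℕ) : ℤ) (by simp)).inv.app (X 1) ≫ 𝟙 _ ≫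
        ((shiftFunctorZero' T ((0 : ℕ) : ℤ) (by simp)).hom.app (X 1) ≫ lam 0) = lam 0
      simp
    | succ m ih =>
      rw [E.ιLe_succ' (Nat.succ_le_succ (Nat.zero_le m))]
      refine Eq.trans (congrArg (fun t : E.F 1 ⟶ X 0 => E.sig ≫ t) (assoc (E.ιLe (Nat.succ_le_succ (Nat.zero_le m))) (E.i (m + 1)) (W (m + 1)).gq)) ?_; show E.sig ≫ E.ιLe (Nat.succ_le_succ (Nat.zero_le m)) ≫ E.i (m + 1) ≫ (W (m + 1)).gq = lam 0
      rw [show E.i (m + 1) ≫ (W (m + 1)).gq = (W m).gq from (W m).hg]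
      exact ih
  refine Eq.trans (assoc E.sig (E.ιLe (Nat.succ_le_succ (Nat.zero_le n))) (W n).gq) ?_
  exact key n

lemma keyFF (m : ℕ) (hm : m ≤ n) : KeyF n U ((Efo hU hXU hcomp).F m) m := by
  match m with
  | 0 => exact keyF_of_isZero (isZero_zero T) 0
  | (j + 1) => exact (Tow n U X lam hU hXU hcomp j).keyq (by omega)

lemma Efo_obs :
    (lam (n + 1))⟦(n : ℤ)⟧' ≫ (Efo hU hXU hcomp).d n = 0 := by
  match n, U, X, lam, hU, hXU, hcomp with
  | 0, U, X, lam, hU, hXU, hcomp => exact comp_zero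
  | (t + 1), U, X, lam, hU, hXU, hcomp =>
    letI E := Efo hU hXU hcomp
    have h1 : ((lam (t + 2))⟦((t + 1 : ℕ) : ℤ)⟧' ≫ E.d (t + 1)) ≫ (E.p t)⟦(1 : ℤ)⟧' = 0 := by
      rw [assoc, E.comm t (by omega), ← Functor.map_comp_assoc, hcomp (t + 1) (by omega)]
      simp
    have hdist1 := Triangle.shift_distinguished _ (E.dist t (by omega)) 1
    have h2 : ((lam (t + 2))⟦((t + 1 : ℕ) : ℤ)⟧' ≫ E.d (t + 1)) ≫
        ((1 : ℤ).negOnePow • (E.p t)⟦(1 : ℤ)⟧') = 0 := by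
      rw [Linear.comp_units_smul, h1, smul_zero]
    obtain ⟨q, hq⟩ := Triangle.coyoneda_exact₂ _ hdist1 _ h2
    have hkey : KeyF (t + 1) U (E.F t) t := keyFF hU hXU hcomp t (by omega)
    have hq0 : q = 0 :=
      hkey (X (t + 3)) (hXU (t + 3) (by omega)) ((t + 1 : ℕ) : ℤ) 1
        (fun i hi => not_dvd_aux (t + 1) (by push_cast; omega) (by push_cast; omega)) q
    rw [hq, hq0, zero_comp]; rfl

lemma Efo_gammat :
    ∃ γt : (X (n + 2))⟦(n : ℤ)⟧ ⟶ (Efo hU hXU hcomp).F (n + 1),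
      γt ≫ (Efo hU hXU hcomp).p n = (lam (n + 1))⟦(n : ℤ)⟧' := by
  obtain ⟨γt, hγt⟩ := Triangle.coyoneda_exact₃ _ ((Efo hU hXU hcomp).dist n (by omega)) _
    (Efo_obs hU hXU hcomp)
  exact ⟨γt, hγt.symm⟩

end Assemble

end HigherToda

/-- let `U` be an `n`-split full subcategory of `T` and let
`X_{n+2} ⟶(λ_{n+2}) ⋯ ⟶(λ₁) X₀` be a sequence of maps between objects of `U` with
`λᵢ ∘ λᵢ₊₁ = 0` for `1 ≤ i ≤ n+1`. Then the `(n+2)`-fold Toda bracket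
`⟨λ₁, …, λ_{n+2}⟩` is non-empty. -/
theorem todaBracket_nonempty (n : ℕ) (U : Set T) (hU : IsNSplit T n U)
    (X : ℕ → T) (lam : ∀ j : ℕ, X (j + 1) ⟶ X j)
    (hXU : ∀ j, j ≤ n + 2 → X j ∈ U)
    (hcomp : ∀ j, j ≤ n → lam (j + 1) ≫ lam j = 0) :
    (todaBracket T n X lam).Nonempty := by
  have hU' : IsNSplit' n U := hU
  obtain ⟨γt, hγt⟩ := Efo_gammat hU' hXU hcomp
  exact ⟨γt ≫ (Tow n U X lam hU' hXU hcomp n).gq,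
    Efo hU' hXU hcomp, (Tow n U X lam hU' hXU hcomp n).gq, γt,
    Efo_gamma0 hU' hXU hcomp, hγt, rfl⟩
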